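/- arXiv:2006.12207 — 3 statements merged into one kernel-verified Lean document; each statement's English description precedes it below -/
import Mathlib

section
/- Let A be a finite alphabet, φ: A* → A* a morphism in Class P_ret, and u ∈ A^ℕ an infinite word. Then the language L(u) is closed under reversal if and only if the language L(φ(u)) is closed under reversal. -/
open List

/-- Apply a morphism (given by its values on letters) to a finite word. -/
def applyM {A : Type*} (φ : A → List A) (v : List A) : List A := v.flatMap φ

/-- The set of occurrences of `w` as a factor of `u`:
indices `i` such that the block of `u` of length `|w|` starting at `i` equals `w`. -/
def occs {A : Type*} [DecidableEq A] (w u : List A) : Finset ℕ :=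
  (Finset.range (u.length + 1)).filter
    (fun i => i + w.length ≤ u.length ∧ (u.drop i).take w.length = w)

/-- A morphism `φ` belongs to Class `P_ret` with marker `w` if it is injective on
letters, `w` is a palindrome, and for each letter `a` the word `φ(a)w` is a palindrome
in which `w` occurs exactly twice, namely as a prefix (position `0`) and as a suffix
(position `|φ(a)|`, distinct from `0`). -/
def IsPretWithMarker {A : Type*} [DecidableEq A] (φ : A → List A) (w : List A) : Prop :=
  Function.Injective φ ∧ w.reverse = w ∧
    ∀ a : A, (φ a ++ w).reverse = φ a ++ w ∧
      occs w (φ a ++ w) = {0, (φ a).length} ∧ (φ a).length ≠ 0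

/-- The block of length `len` of the infinite word `u` starting at position `i`. -/
def factorAt {A : Type*} (u : ℕ → A) (i len : ℕ) : List A :=
  (List.range len).map fun k => u (i + k)

/-- `i` is an occurrence of the finite word `v` in the infinite word `u`. -/
def OccursAt {A : Type*} (u : ℕ → A) (v : List A) (i : ℕ) : Prop :=
  factorAt u i v.length = v

/-- `v` belongs to the language of the infinite word `u`, i.e. `v` is a factor of `u`. -/
def InLang {A : Type*} (u : ℕ → A) (v : List A) : Prop := ∃ i, OccursAt u v i

/-- The image `φ(u) = φ(u₀)φ(u₁)φ(u₂)⋯` of an infinite word `u` under a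
(non-erasing) morphism `φ`, as an infinite word. -/
def applyInf {A : Type*} (φ : A → List A) (u : ℕ → A) (n : ℕ) : A :=
  (((List.range (n + 1)).flatMap fun i => φ (u i))).getD n (u 0)

/-- The language of `u` is closed under reversal. -/
def ClosedUnderReversal {A : Type*} (u : ℕ → A) : Prop :=
  ∀ v : List A, InLang u v → InLang u v.reverse

/-- A finite word is rich if its number of palindromic factors (including `ε`)
equals its length plus one. -/
def RichWord {A : Type*} (u : List A) : Prop :=
  {p : List A | p <:+: u ∧ p.reverse = p}.ncard = u.length + 1

/-- An infinite word is rich if all its finite prefixes are rich. -/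
def RichInf {A : Type*} (u : ℕ → A) : Prop := ∀ n : ℕ, RichWord (factorAt u 0 n)

/-- An infinite word is recurrent if each of its factors occurs infinitely often. -/
def Recurrent {A : Type*} (u : ℕ → A) : Prop :=
  ∀ v : List A, InLang u v → ∀ N : ℕ, ∃ i, N ≤ i ∧ OccursAt u v i

/-- `r` is a return word to `w` in the infinite word `u`: `wr ∈ L(u)` and `w`
occurs in `wr` exactly twice, as a prefix and as a suffix. -/
def IsReturnWord {A : Type*} [DecidableEq A] (u : ℕ → A) (w r : List A) : Prop :=
  r ≠ [] ∧ InLang u (w ++ r) ∧ occs w (w ++ r) = {0, r.length}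

/-- Left extensions of `x` in the language of `u`. -/
def leftExt {A : Type*} (u : ℕ → A) (x : List A) : Set A := {a | InLang u (a :: x)}

/-- Right extensions of `x` in the language of `u`. -/
def rightExt {A : Type*} (u : ℕ → A) (x : List A) : Set A := {b | InLang u (x ++ [b])}

/-- Bi-extensions of `x` in the language of `u`. -/
def biExt {A : Type*} (u : ℕ → A) (x : List A) : Set (A × A) :=
  {p | InLang u (p.1 :: (x ++ [p.2]))}

/-- `x` is bispecial in `u`. -/
def Bispecial {A : Type*} (u : ℕ → A) (x : List A) : Prop :=
  2 ≤ (leftExt u x).ncard ∧ 2 ≤ (rightExt u x).ncard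

/-- The bilateral order `b_u(x) = #B_u(x) − #L_u(x) − #R_u(x) + 1`. -/
noncomputable def bilateralOrder {A : Type*} (u : ℕ → A) (x : List A) : ℤ :=
  ((biExt u x).ncard : ℤ) - (leftExt u x).ncard - (rightExt u x).ncard + 1

/-- The number of palindromic extensions of `x` in `u`. -/
noncomputable def pext {A : Type*} (u : ℕ → A) (x : List A) : ℕ :=
  {a | InLang u (a :: (x ++ [a]))}.ncard

/-- Arnoux-Rauzy morphisms: the monoid of morphisms generated by permutations of the
alphabet and by the elementary morphisms `ψ_a : a ↦ a, b ↦ ab` and `ψ̄_a : a ↦ a, b ↦ ba`. -/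
inductive IsAR {A : Type*} [DecidableEq A] : (A → List A) → Prop
  | perm (π : Equiv.Perm A) : IsAR (fun a => [π a])
  | psiL (a : A) : IsAR (fun b => if b = a then [a] else [a, b])
  | psiR (a : A) : IsAR (fun b => if b = a then [a] else [b, a])
  | comp {φ ψ : A → List A} : IsAR φ → IsAR ψ → IsAR (fun a => applyM φ (ψ a))

/-- The `k`-th power `φ^k` of a morphism. -/
def powM {A : Type*} (φ : A → List A) : ℕ → A → List A
  | 0, a => [a]
  | n + 1, a => applyM (powM φ n) (φ a)

/-- A morphism is primitive if some power of it maps every letter to a word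
containing every letter. -/
def PrimitiveM {A : Type*} (φ : A → List A) : Prop :=
  ∃ k : ℕ, ∀ a b : A, b ∈ powM φ k a

/-- A (acyclic) morphism is marked: it has a rightmost conjugate `φR` whose
last-letter map is injective, and a leftmost conjugate `φL` whose first-letter map
is injective. -/
def Marked {A : Type*} (φ : A → List A) : Prop :=
  ∃ (φR φL : A → List A) (x y : List A),
    (∀ a, φ a ++ x = x ++ φR a) ∧
    (∀ a, φL a ++ y = y ++ φ a) ∧
    (∃ a b : A, (φR a).getLast? ≠ (φR b).getLast?) ∧
    (∃ a b : A, (φL a).head? ≠ (φL b).head?) ∧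
    Function.Injective (fun c => (φR c).getLast?) ∧
    Function.Injective (fun c => (φL c).head?)

/-!
Since `w` and every `φ(a)w` are palindromes, `(φ(y)w)ᴿ = φ(yᴿ)w` for every finite word `y`.
Since `w` occurs in `φ(a)w` only as a prefix and as a suffix, the occurrences of `w` in `φ(z)w`
sit exactly at the block boundaries, and from there the letters of `z` are read off one by one;
hence `φ(y)w` is a factor of `φ(z)` only if `y` is a factor of `z`. The factors of `φ(u)` are the
factors of the words `φ(x)` with `x ∈ L(u)`, and `φ(x)w ∈ L(φ(u))` for every `x ∈ L(u)`, so
reversal closure passes in both directions through `(φ(x)w)ᴿ = φ(xᴿ)w`.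
-/

section InfiniteWord

variable {A : Type*} (x : ℕ → A)

@[simp]
lemma length_factorAt (i n : ℕ) : (factorAt x i n).length = n := by
  simp [factorAt]

@[simp]
lemma getElem_factorAt {i n k : ℕ} (hk : k < (factorAt x i n).length) :
    (factorAt x i n)[k] = x (i + k) := by
  simp [factorAt]

lemma factorAt_add (i m n : ℕ) :
    factorAt x i (m + n) = factorAt x i m ++ factorAt x (i + m) n := by
  simp [factorAt, range_add, Function.comp_def, add_assoc]

lemma factorAt_prefix {i m n : ℕ} (h : m ≤ n) : factorAt x i m <+: factorAt x i n := by
  obtain ⟨k, rfl⟩ := Nat.exists_eq_add_of_le h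
  rw [factorAt_add]
  exact prefix_append _ _

lemma inLang_factorAt (i n : ℕ) : InLang x (factorAt x i n) :=
  ⟨i, by simp [OccursAt]⟩

lemma inLang_iff_exists_infix {v : List A} : InLang x v ↔ ∃ n, v <:+: factorAt x 0 n := by
  constructor
  · rintro ⟨i, hi⟩
    refine ⟨i + v.length, factorAt x 0 i, [], ?_⟩
    rw [factorAt_add, zero_add, hi, append_nil]
  · rintro ⟨n, s, t, hst⟩
    have hn : n = s.length + v.length + t.length := by
      simpa [add_assoc] using (congrArg length hst).symm
    rw [hn, factorAt_add, factorAt_add, zero_add] at hst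
    obtain ⟨hsv, -⟩ := append_inj hst (by simp)
    exact ⟨s.length, (append_inj hsv (by simp)).2.symm⟩

variable {x}

lemma InLang.of_infix {v v' : List A} (h : InLang x v) (hv : v' <:+: v) : InLang x v' := by
  obtain ⟨n, hn⟩ := (inLang_iff_exists_infix x).1 h
  exact (inLang_iff_exists_infix x).2 ⟨n, hv.trans hn⟩

end InfiniteWord

section Morphism

variable {A : Type*} {φ : A → List A}

@[simp]
lemma applyM_nil : applyM φ [] = [] := rfl

lemma applyM_cons (a : A) (y : List A) : applyM φ (a :: y) = φ a ++ applyM φ y := rfl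

lemma applyM_append (y z : List A) : applyM φ (y ++ z) = applyM φ y ++ applyM φ z :=
  flatMap_append

lemma length_le_length_applyM (hφ : ∀ a, φ a ≠ []) (y : List A) :
    y.length ≤ (applyM φ y).length := by
  induction y with
  | nil => simp
  | cons a y ih =>
    have hpos := length_pos_iff.2 (hφ a)
    simp only [applyM_cons, length_append, length_cons]
    omega

lemma applyInf_eq_getElem (hφ : ∀ a, φ a ≠ []) (u : ℕ → A) {k m : ℕ}
    (hk : k < (applyM φ (factorAt u 0 m)).length) :
    applyInf φ u k = (applyM φ (factorAt u 0 m))[k] := by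
  have hk' : k < (applyM φ (factorAt u 0 (k + 1))).length :=
    lt_of_lt_of_le (by simp) (length_le_length_applyM hφ _)
  have hpre : applyM φ (factorAt u 0 (k + 1)) = (range (k + 1)).flatMap fun i => φ (u i) := by
    simp [applyM, factorAt, flatMap_map]
  rw [applyInf, ← hpre, getD_eq_getElem _ _ hk']
  rcases le_total (k + 1) m with hm | hm
  · exact ((factorAt_prefix u hm).flatMap φ).getElem hk'
  · exact (((factorAt_prefix u hm).flatMap φ).getElem hk).symm

lemma factorAt_applyInf_length_applyM (hφ : ∀ a, φ a ≠ []) (u : ℕ → A) (m : ℕ) :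
    factorAt (applyInf φ u) 0 (applyM φ (factorAt u 0 m)).length = applyM φ (factorAt u 0 m) :=
  ext_getElem (by simp) fun k hk _ => by
    rw [getElem_factorAt, zero_add]
    exact applyInf_eq_getElem hφ u (by simpa using hk)

lemma inLang_applyInf_iff (hφ : ∀ a, φ a ≠ []) (u : ℕ → A) {v : List A} :
    InLang (applyInf φ u) v ↔ ∃ m, v <:+: applyM φ (factorAt u 0 m) := by
  rw [inLang_iff_exists_infix]
  constructor
  · rintro ⟨n, hn⟩
    refine ⟨n, hn.trans (IsPrefix.isInfix ?_)⟩
    rw [← factorAt_applyInf_length_applyM hφ u n]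
    exact factorAt_prefix _ (by simpa using length_le_length_applyM hφ (factorAt u 0 n))
  · rintro ⟨m, hm⟩
    exact ⟨_, by rwa [factorAt_applyInf_length_applyM hφ u m]⟩

end Morphism

namespace IsPretWithMarker

variable {A : Type*} [DecidableEq A] {φ : A → List A} {w : List A}

lemma ne_nil (h : IsPretWithMarker φ w) (a : A) : φ a ≠ [] :=
  fun ha => (h.2.2 a).2.2 (by rw [ha, length_nil])

lemma reverse_applyM_append (h : IsPretWithMarker φ w) (y : List A) :
    (applyM φ y ++ w).reverse = applyM φ y.reverse ++ w := by
  induction y with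
  | nil => exact h.2.1
  | cons a y ih =>
    have hwa : w ++ (φ a).reverse = φ a ++ w := by
      simpa [h.2.1] using (h.2.2 a).1
    calc (applyM φ (a :: y) ++ w).reverse = (applyM φ y ++ w).reverse ++ (φ a).reverse := by
          simp [applyM_cons]
      _ = applyM φ y.reverse ++ (φ a ++ w) := by rw [ih, append_assoc, hwa]
      _ = applyM φ (a :: y).reverse ++ w := by simp [applyM_append, applyM_cons]

lemma prefix_applyM_append (h : IsPretWithMarker φ w) (y : List A) :
    w <+: applyM φ y ++ w := by
  have := h.reverse_applyM_append y.reverse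
  rw [reverse_reverse, reverse_append, h.2.1] at this
  exact ⟨_, this⟩

lemma prefix_applyM (h : IsPretWithMarker φ w) {y : List A} (hy : w.length ≤ y.length) :
    w <+: applyM φ y :=
  prefix_of_prefix_length_le (h.prefix_applyM_append y) (prefix_append _ _)
    (hy.trans (length_le_length_applyM h.ne_nil y))

lemma append_prefix_applyM_cons_append (h : IsPretWithMarker φ w) (a : A) (y : List A) :
    φ a ++ w <+: applyM φ (a :: y) ++ w := by
  rw [applyM_cons, append_assoc]
  exact (prefix_append_right_inj _).2 (h.prefix_applyM_append y)

lemma applyM_append_infix (h : IsPretWithMarker φ w) {y z : List A} (hyz : y <:+: z) :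
    applyM φ y ++ w <:+: applyM φ z ++ w := by
  obtain ⟨s, t, rfl⟩ := hyz
  obtain ⟨r, hr⟩ := h.prefix_applyM_append t
  exact ⟨applyM φ s, r, by simp only [applyM_append, append_assoc, hr]⟩

lemma eq_nil_or_eq_of_append_prefix (h : IsPretWithMarker φ w) {s : List A} {a : A}
    (hs : s ++ w <+: φ a ++ w) : s = [] ∨ s = φ a := by
  have hocc : s.length ∈ occs w (φ a ++ w) := by
    obtain ⟨t, ht⟩ := hs
    simp [occs, ← ht]
  rw [(h.2.2 a).2.1, Finset.mem_insert, Finset.mem_singleton, length_eq_zero_iff] at hocc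
  exact hocc.imp_right fun hl => append_cancel_right (hs.eq_of_length (by simp [hl]))

lemma eq_of_prefix_of_prefix (h : IsPretWithMarker φ w) {a b : A} {l : List A}
    (ha : φ a ++ w <+: l) (hb : φ b ++ w <+: l) : a = b := by
  have key : ∀ {a b : A}, φ a ++ w <+: φ b ++ w → a = b := fun hab =>
    h.1 ((h.eq_nil_or_eq_of_append_prefix hab).resolve_left (h.ne_nil _))
  exact (prefix_or_prefix_of_prefix ha hb).elim key fun hba => (key hba).symm

lemma exists_eq_applyM_take_of_append_prefix (h : IsPretWithMarker φ w) {s z : List A}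
    (hs : s ++ w <+: applyM φ z ++ w) : ∃ k, s = applyM φ (z.take k) := by
  induction z generalizing s with
  | nil =>
    refine ⟨0, append_left_eq_self.1 (hs.eq_of_length_le ?_)⟩
    simp [applyM]
  | cons b z ih =>
    rcases prefix_or_prefix_of_prefix hs (h.append_prefix_applyM_cons_append b z) with hsb | hbs
    · rcases h.eq_nil_or_eq_of_append_prefix hsb with rfl | rfl
      · exact ⟨0, rfl⟩
      · exact ⟨1, by simp [applyM]⟩
    · obtain ⟨s', rfl⟩ : φ b <+: s :=
        prefix_of_prefix_length_le ((prefix_append _ _).trans hbs) (prefix_append _ _)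
          (by simpa using hbs.length_le)
      rw [applyM_cons, append_assoc, append_assoc, prefix_append_right_inj] at hs
      obtain ⟨k, rfl⟩ := ih hs
      exact ⟨k + 1, rfl⟩

lemma prefix_of_applyM_append_prefix (h : IsPretWithMarker φ w) {y z : List A}
    (hyz : applyM φ y ++ w <+: applyM φ z ++ w) : y <+: z := by
  induction y generalizing z with
  | nil => exact nil_prefix
  | cons a y ih =>
    cases z with
    | nil =>
      have hlen := hyz.length_le
      have hpos := length_pos_iff.2 (h.ne_nil a)
      simp only [applyM_cons, applyM_nil, length_append, length_nil] at hlen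
      omega
    | cons b z =>
      obtain rfl : a = b := h.eq_of_prefix_of_prefix
        ((h.append_prefix_applyM_cons_append a y).trans hyz)
        (h.append_prefix_applyM_cons_append b z)
      rw [applyM_cons, applyM_cons, append_assoc, append_assoc, prefix_append_right_inj] at hyz
      exact (prefix_cons_inj a).2 (ih hyz)

lemma infix_of_applyM_append_infix (h : IsPretWithMarker φ w) {y z : List A}
    (hyz : applyM φ y ++ w <:+: applyM φ z) : y <:+: z := by
  obtain ⟨s, t, hst⟩ := hyz
  have hs : s ++ w <+: applyM φ z ++ w :=
    ((prefix_append_right_inj s).2 (h.prefix_applyM_append y)).trans ⟨t, hst⟩ |>.trans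
      (prefix_append _ _)
  obtain ⟨k, rfl⟩ := h.exists_eq_applyM_take_of_append_prefix hs
  rw [← take_append_drop k z, applyM_append, take_append_drop, append_assoc, append_assoc] at hst
  have hdrop : applyM φ y ++ w <+: applyM φ (z.drop k) ++ w :=
    IsPrefix.trans ⟨t, by rw [append_assoc]; exact append_cancel_left hst⟩ (prefix_append _ _)
  exact (h.prefix_of_applyM_append_prefix hdrop).isInfix.trans (drop_suffix k z).isInfix

lemma inLang_applyInf_applyM_append (h : IsPretWithMarker φ w) {u : ℕ → A} {x : List A}
    (hx : InLang u x) : InLang (applyInf φ u) (applyM φ x ++ w) := by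
  obtain ⟨n, hn⟩ := (inLang_iff_exists_infix u).1 hx
  refine (inLang_applyInf_iff h.ne_nil u).2 ⟨n + w.length, (h.applyM_append_infix hn).trans ?_⟩
  rw [factorAt_add, applyM_append]
  exact ((prefix_append_right_inj _).2 (h.prefix_applyM (by simp))).isInfix

end IsPretWithMarker

theorem pret_closed_under_reversal_iff_general {A : Type*} [DecidableEq A]
    (φ : A → List A) (w : List A) (h : IsPretWithMarker φ w) (u : ℕ → A) :
    ClosedUnderReversal u ↔ ClosedUnderReversal (applyInf φ u) := by
  constructor
  · intro hu v hv
    obtain ⟨m, hvm⟩ := (inLang_applyInf_iff h.ne_nil u).1 hv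
    have hrev := h.inLang_applyInf_applyM_append (hu _ (inLang_factorAt u 0 m))
    refine hrev.of_infix ?_
    rw [← h.reverse_applyM_append]
    exact reverse_infix.2 (hvm.trans (prefix_append _ _).isInfix)
  · intro hφu x hx
    have hrev := hφu _ (h.inLang_applyInf_applyM_append hx)
    rw [h.reverse_applyM_append] at hrev
    obtain ⟨m, hm⟩ := (inLang_applyInf_iff h.ne_nil u).1 hrev
    exact (inLang_iff_exists_infix u).2 ⟨m, h.infix_of_applyM_append_infix hm⟩

/-- For a `P_ret` morphism `φ`, the language of `u` is closed under
reversal iff the language of `φ(u)` is closed under reversal. -/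
theorem pret_closed_under_reversal_iff {A : Type*} [Fintype A] [DecidableEq A]
    (φ : A → List A) (w : List A) (h : IsPretWithMarker φ w) (u : ℕ → A) :
    ClosedUnderReversal u ↔ ClosedUnderReversal (applyInf φ u) :=
  pret_closed_under_reversal_iff_general φ w h u
end

section
/- Let A be a finite alphabet and φ: A* → A* a morphism in Class P_ret. If ψ: A* → A* is a right conjugate of φ, i.e., there exists a word x ∈ A* such that ψ(a)x = xφ(a) for every letter a ∈ A, then ψ also belongs to Class P_ret. -/
open List

/-!
The marker of `ψ` is `x w rev(x)`. As `w` is a palindrome, `φ(a) w` is a palindrome iff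
`φ(a) w = w rev(φ(a))`, and conjugating by `x` turns this into
`ψ(a) (x w rev(x)) = (x w rev(x)) rev(ψ(a))`. Moreover `ψ(a) (x w rev(x)) = x (φ(a) w) rev(x)`,
so an occurrence of `x w rev(x)` in it at position `i` yields an occurrence of `w` in `φ(a) w`
at position `i`: the new marker still occurs only as a prefix and as a suffix.
-/

section Words

variable {A : Type*}

section Occurrences

variable [DecidableEq A]

lemma mem_occs {w u : List A} {i : ℕ} :
    i ∈ occs w u ↔ i + w.length ≤ u.length ∧ (u.drop i).take w.length = w := by
  simp only [occs, Finset.mem_filter, Finset.mem_range]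
  exact ⟨And.right, fun h => ⟨by omega, h⟩⟩

lemma zero_mem_occs_of_prefix {w u : List A} (h : w <+: u) : 0 ∈ occs w u := by
  obtain ⟨s, rfl⟩ := h
  simp [mem_occs]

lemma length_mem_occs_append (v w : List A) : v.length ∈ occs w (v ++ w) := by
  simp [mem_occs]

lemma mem_occs_of_mem_occs_append_append {x w z u z' : List A} {i : ℕ}
    (hz : z.length = z'.length) (h : i ∈ occs (x ++ w ++ z) (x ++ u ++ z')) :
    i ∈ occs w u := by
  rw [mem_occs] at h ⊢
  obtain ⟨hle, htake⟩ := h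
  simp only [length_append] at hle
  have hiu : i + w.length ≤ u.length := by omega
  have hmid := congrArg (fun l => (l.drop x.length).take w.length) htake
  simp only [drop_take, take_take, drop_drop, append_assoc, drop_left,
    take_append_of_le_length le_rfl, take_length, length_append] at hmid
  rw [min_eq_left (by omega), add_comm, drop_length_add_append,
    drop_append_of_le_length (by omega), take_append_of_le_length (by simp; omega)] at hmid
  exact ⟨hiu, hmid⟩

end Occurrences

lemma reverse_append_eq_self_iff {u w : List A} (hw : w.reverse = w) :
    (u ++ w).reverse = u ++ w ↔ u ++ w = w ++ u.reverse := by
  rw [reverse_append, hw, eq_comm]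

lemma append_append_append_of_conj {u v x : List A} (hconj : v ++ x = x ++ u) (w y : List A) :
    v ++ (x ++ w ++ y) = x ++ (u ++ w) ++ y := by
  simp only [← append_assoc, hconj]

lemma append_sandwich_eq_of_conj {u v w x : List A} (hconj : v ++ x = x ++ u)
    (h : u ++ w = w ++ u.reverse) :
    v ++ (x ++ w ++ x.reverse) = x ++ w ++ x.reverse ++ v.reverse := by
  have hrev : u.reverse ++ x.reverse = x.reverse ++ v.reverse := by
    simpa only [reverse_append] using (congrArg reverse hconj).symm
  calc v ++ (x ++ w ++ x.reverse) = x ++ (u ++ w) ++ x.reverse :=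
        append_append_append_of_conj hconj w x.reverse
    _ = x ++ w ++ x.reverse ++ v.reverse := by
        simp only [h, append_assoc, hrev]

def IsPalindromicReturn [DecidableEq A] (w u : List A) : Prop :=
  (u ++ w).reverse = u ++ w ∧ occs w (u ++ w) = {0, u.length} ∧ u.length ≠ 0

theorem IsPalindromicReturn.conj [DecidableEq A] {u v w x : List A} (h : IsPalindromicReturn w u)
    (hw : w.reverse = w) (hconj : v ++ x = x ++ u) :
    IsPalindromicReturn (x ++ w ++ x.reverse) v := by
  obtain ⟨hpal, hocc, hne⟩ := h
  set w' := x ++ w ++ x.reverse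
  have hw' : w'.reverse = w' := by simp [w', hw]
  have hlen : v.length = u.length := by
    have := congrArg length hconj
    simp only [length_append] at this
    omega
  have hcomm : v ++ w' = w' ++ v.reverse :=
    append_sandwich_eq_of_conj hconj ((reverse_append_eq_self_iff hw).1 hpal)
  refine ⟨(reverse_append_eq_self_iff hw').2 hcomm, ?_, by omega⟩
  apply Finset.Subset.antisymm
  · intro i hi
    rw [append_append_append_of_conj hconj] at hi
    have := mem_occs_of_mem_occs_append_append rfl hi
    rwa [hocc, ← hlen] at this
  · rw [Finset.insert_subset_iff, Finset.singleton_subset_iff]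
    exact ⟨zero_mem_occs_of_prefix (hcomm ▸ prefix_append _ _), length_mem_occs_append _ _⟩

end Words

theorem pret_right_conjugate_general {A : Type*} [DecidableEq A]
    (φ ψ : A → List A) (w : List A) (h : IsPretWithMarker φ w)
    (x : List A) (hconj : ∀ a : A, ψ a ++ x = x ++ φ a) :
    ∃ w' : List A, IsPretWithMarker ψ w' := by
  obtain ⟨hinj, hw, hret⟩ := h
  refine ⟨x ++ w ++ x.reverse, ?_, by simp [hw],
    fun a => IsPalindromicReturn.conj (hret a) hw (hconj a)⟩
  intro a b hab
  exact hinj (append_cancel_left (by rw [← hconj a, ← hconj b, hab]))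

/-- Every right conjugate of a `P_ret` morphism belongs to `P_ret`. -/
theorem pret_right_conjugate {A : Type*} [Fintype A] [DecidableEq A]
    (φ ψ : A → List A) (w : List A) (h : IsPretWithMarker φ w)
    (x : List A) (hconj : ∀ a : A, ψ a ++ x = x ++ φ a) :
    ∃ w' : List A, IsPretWithMarker ψ w' :=
  pret_right_conjugate_general φ ψ w h x hconj
end

section
/- Each Arnoux-Rauzy morphism is conjugated to a morphism in Class P_ret: for every Arnoux-Rauzy morphism φ over a finite alphabet A there exist a morphism ψ: A* → A* belonging to Class P_ret and a word x ∈ A* such that ψ(a)x = xφ(a) for every letter a ∈ A. -/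
open List

/-!
Since `ψ_a(b) a = a ψ̄_a(b)`, each `ψ̄_a` is conjugate to `ψ_a`, and conjugacy is compatible
with composition; so every Arnoux-Rauzy morphism is conjugate to a product of permutations
and morphisms `ψ_a`. Such a product is in `P_ret`: if `ψ` has marker `w`, then `ψ_a ∘ ψ` has
marker `ψ_a(w) a`. Indeed, in `ψ_a(u) a` the letter `a` only occurs at the boundaries of the
blocks `ψ_a(c)`, and `ψ_a(u) a = a ψ̄_a(u)` where `ψ̄_a` is a prefix code, so the occurrences
of `ψ_a(w) a` in `ψ_a(u) a` are exactly the images of the occurrences of `w` in `u`.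
-/

section Morphism

variable {A : Type*}

@[simp]
lemma applyM_nil_s8 (f : A → List A) : applyM f [] = [] := rfl

@[simp]
lemma applyM_cons_s8 (f : A → List A) (c : A) (v : List A) :
    applyM f (c :: v) = f c ++ applyM f v := flatMap_cons

@[simp]
lemma applyM_append_s8 (f : A → List A) (u v : List A) :
    applyM f (u ++ v) = applyM f u ++ applyM f v := flatMap_append

lemma applyM_applyM (f g : A → List A) (v : List A) :
    applyM f (applyM g v) = applyM (fun c => applyM f (g c)) v := flatMap_assoc

lemma applyM_append_comm_of_forall {f g : A → List A} {x : List A}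
    (h : ∀ c, f c ++ x = x ++ g c) (v : List A) : applyM f v ++ x = x ++ applyM g v := by
  induction v with
  | nil => simp
  | cons c v ih =>
    rw [applyM_cons_s8, applyM_cons_s8, append_assoc, ih, ← append_assoc, h, append_assoc]

lemma prefix_of_applyM_prefix {f : A → List A} (hne : ∀ c, f c ≠ [])
    (hcode : ∀ c d, f c <+: f d → c = d) {w u : List A} (h : applyM f w <+: applyM f u) :
    w <+: u := by
  induction w generalizing u with
  | nil => exact nil_prefix
  | cons d w ih =>
    cases u with
    | nil => simpa [hne] using h.length_le
    | cons c u =>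
      rw [applyM_cons_s8, applyM_cons_s8] at h
      have hdc : d = c := by
        rcases prefix_or_prefix_of_prefix ((prefix_append _ _).trans h) (prefix_append _ _) with
          hp | hp
        exacts [hcode d c hp, (hcode c d hp).symm]
      subst hdc
      exact (prefix_cons_inj d).2 (ih ((prefix_append_right_inj _).1 h))

lemma exists_take_of_getElem?_applyM_append_eq {f : A → List A} {a : A}
    (hf : ∀ c, ∃ t, f c = a :: t ∧ a ∉ t) {U : List A} {i : ℕ}
    (h : (applyM f U ++ [a])[i]? = some a) :
    ∃ j ≤ U.length, i = (applyM f (U.take j)).length := by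
  induction U generalizing i with
  | nil => rcases i with _ | i <;> simp_all
  | cons c U ih =>
    obtain ⟨t, ht, hat⟩ := hf c
    rw [applyM_cons_s8, ht, cons_append, cons_append, append_assoc] at h
    rcases i with _ | i
    · exact ⟨0, by simp, by simp⟩
    rw [getElem?_cons_succ] at h
    by_cases hi : i < t.length
    · rw [getElem?_append_left hi] at h
      exact absurd (mem_of_getElem? h) hat
    rw [getElem?_append_right (by omega)] at h
    obtain ⟨j, hj, hij⟩ := ih h
    exact ⟨j + 1, by simpa using hj, by simp [ht]; omega⟩

end Morphism

section Occurrences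

variable {A : Type*} [DecidableEq A]

lemma mem_occs_iff {w u : List A} {i : ℕ} :
    i ∈ occs w u ↔ i ≤ u.length ∧ w <+: u.drop i := by
  simp only [occs, Finset.mem_filter, Finset.mem_range, Nat.lt_succ_iff, prefix_iff_eq_take,
    eq_comm (a := w)]
  constructor
  · rintro ⟨hi, -, h⟩
    exact ⟨hi, h⟩
  · rintro ⟨hi, h⟩
    have := congrArg length h
    simp only [length_take, length_drop] at this
    exact ⟨hi, by omega, h⟩

lemma occs_map {B : Type*} [DecidableEq B] {f : A → B} (hf : Function.Injective f)
    (w u : List A) : occs (w.map f) (u.map f) = occs w u := by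
  simp only [occs, length_map, ← map_drop, ← map_take, (map_injective_iff.2 hf).eq_iff]

end Occurrences

section Psi

variable {A : Type*} [DecidableEq A]

def psi (a : A) (b : A) : List A := if b = a then [a] else [a, b]

def psiBar (a : A) (b : A) : List A := if b = a then [a] else [b, a]

lemma psi_append_singleton (a c : A) : psi a c ++ [a] = [a] ++ psiBar a c := by
  unfold psi psiBar; split_ifs <;> rfl

lemma applyM_psi_append_singleton (a : A) (u : List A) :
    applyM (psi a) u ++ [a] = a :: applyM (psiBar a) u :=
  applyM_append_comm_of_forall (psi_append_singleton a) u

lemma reverse_psi (a : A) : reverse ∘ psi a = psiBar a := by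
  funext c; simp only [Function.comp, psi, psiBar]; split_ifs <;> rfl

lemma reverse_applyM_psi_append_singleton (a : A) (u : List A) :
    (applyM (psi a) u ++ [a]).reverse = applyM (psi a) u.reverse ++ [a] := by
  rw [reverse_append, applyM, reverse_flatMap, reverse_psi, ← applyM,
    applyM_psi_append_singleton]
  rfl

lemma prefix_applyM_psi_append_singleton_iff (a : A) {w u : List A} :
    applyM (psi a) w ++ [a] <+: applyM (psi a) u ++ [a] ↔ w <+: u := by
  rw [applyM_psi_append_singleton, applyM_psi_append_singleton, prefix_cons_inj]
  refine ⟨prefix_of_applyM_prefix (fun c => ?_) (fun c d h => ?_), fun h => h.flatMap _⟩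
  · unfold psiBar; split_ifs <;> simp
  · unfold psiBar at h; split_ifs at h <;> simp_all

lemma length_applyM_psi_ne_zero (a : A) {v : List A} (hv : v ≠ []) :
    (applyM (psi a) v).length ≠ 0 := by
  obtain ⟨c, v, rfl⟩ := exists_cons_of_ne_nil hv
  rw [applyM_cons_s8, length_append]
  unfold psi; split_ifs <;> simp

lemma exists_psi_eq_cons_notMem (a c : A) : ∃ t, psi a c = a :: t ∧ a ∉ t := by
  unfold psi
  split_ifs with hc
  exacts [⟨[], rfl, by simp⟩, ⟨[c], rfl, by simpa [eq_comm] using hc⟩]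

lemma occs_applyM_psi_append_singleton (a : A) (w U : List A) :
    occs (applyM (psi a) w ++ [a]) (applyM (psi a) U ++ [a]) =
      (occs w U).image fun j => (applyM (psi a) (U.take j)).length := by
  have hdrop : ∀ j, (applyM (psi a) U ++ [a]).drop (applyM (psi a) (U.take j)).length =
      applyM (psi a) (U.drop j) ++ [a] := fun j => by
    conv_lhs => enter [2]; rw [← take_append_drop j U, applyM_append_s8, append_assoc]
    exact drop_left
  ext i
  simp only [Finset.mem_image, mem_occs_iff]
  constructor
  · rintro ⟨-, hpre⟩
    have hhead : (applyM (psi a) U ++ [a])[i]? = some a := by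
      obtain ⟨k, hk⟩ := hpre
      rw [← add_zero i, ← getElem?_drop, ← hk, applyM_psi_append_singleton]
      rfl
    obtain ⟨j, hj, rfl⟩ :=
      exists_take_of_getElem?_applyM_append_eq (exists_psi_eq_cons_notMem a) hhead
    rw [hdrop, prefix_applyM_psi_append_singleton_iff] at hpre
    exact ⟨j, ⟨hj, hpre⟩, rfl⟩
  · rintro ⟨j, ⟨-, hpre⟩, rfl⟩
    refine ⟨?_, by rwa [hdrop, prefix_applyM_psi_append_singleton_iff]⟩
    have := ((take_prefix j U).flatMap (psi a)).length_le
    simp only [applyM, length_append] at this ⊢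
    omega

end Psi

section Pret

variable {A : Type*} [DecidableEq A]

lemma isPretWithMarker_singleton : IsPretWithMarker (fun b : A => [b]) [] := by
  refine ⟨fun b c h => by simpa using h, rfl, fun b => ⟨rfl, ?_, by simp⟩⟩
  ext i
  simp only [mem_occs_iff, append_nil, length_singleton, nil_prefix, and_true,
    Finset.mem_insert, Finset.mem_singleton]
  omega

lemma IsPretWithMarker.map {ψ : A → List A} {w : List A} (h : IsPretWithMarker ψ w)
    {f : A → A} (hf : Function.Injective f) :
    IsPretWithMarker (fun b => (ψ b).map f) (w.map f) := by
  obtain ⟨hinj, hw, hψ⟩ := h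
  refine ⟨fun b c hbc => hinj (map_injective_iff.2 hf hbc), by rw [← map_reverse, hw],
    fun b => ?_⟩
  obtain ⟨hpal, hocc, hne⟩ := hψ b
  refine ⟨by rw [← map_append, ← map_reverse, hpal], ?_, by simpa using hne⟩
  rw [← map_append, occs_map hf, hocc, length_map]

lemma IsPretWithMarker.psi_comp {ψ : A → List A} {w : List A} (h : IsPretWithMarker ψ w)
    (a : A) :
    IsPretWithMarker (fun b => applyM (psi a) (ψ b)) (applyM (psi a) w ++ [a]) := by
  obtain ⟨hinj, hw, hψ⟩ := h
  refine ⟨fun b c hbc => hinj ?_, by rw [reverse_applyM_psi_append_singleton, hw], fun b => ?_⟩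
  · have hpre : ∀ {u v : List A}, applyM (psi a) u = applyM (psi a) v → u <+: v := fun huv =>
      (prefix_applyM_psi_append_singleton_iff a).1 (huv ▸ prefix_refl _)
    exact antisymm (hpre hbc) (hpre hbc.symm)
  obtain ⟨hpal, hocc, hne⟩ := hψ b
  have hsplit : applyM (psi a) (ψ b) ++ (applyM (psi a) w ++ [a]) =
      applyM (psi a) (ψ b ++ w) ++ [a] := by
    rw [applyM_append_s8, append_assoc]
  refine ⟨?_, ?_, length_applyM_psi_ne_zero a (ne_nil_of_length_pos (Nat.pos_of_ne_zero hne))⟩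
  · rw [hsplit, reverse_applyM_psi_append_singleton, hpal]
  · rw [hsplit, occs_applyM_psi_append_singleton, hocc, Finset.image_insert,
      Finset.image_singleton, take_zero, take_left]
    rfl

end Pret

section Standard

variable {A : Type*} [DecidableEq A]

inductive IsStandardAR : (A → List A) → Prop
  | id : IsStandardAR fun b => [b]
  | perm_comp (π : Equiv.Perm A) {ψ : A → List A} :
      IsStandardAR ψ → IsStandardAR fun b => (ψ b).map π
  | psi_comp (a : A) {ψ : A → List A} :
      IsStandardAR ψ → IsStandardAR fun b => applyM (psi a) (ψ b)

lemma IsStandardAR.comp {ψ₁ ψ₂ : A → List A} (h₁ : IsStandardAR ψ₁)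
    (h₂ : IsStandardAR ψ₂) :
    IsStandardAR fun b => applyM ψ₁ (ψ₂ b) := by
  induction h₁ with
  | id => simpa only [applyM, flatMap_singleton'] using h₂
  | perm_comp π _ ih => simpa only [applyM, map_flatMap] using ih.perm_comp π
  | psi_comp a _ ih => simpa only [applyM_applyM] using ih.psi_comp a

lemma IsStandardAR.exists_isPretWithMarker {ψ : A → List A} (h : IsStandardAR ψ) :
    ∃ w, IsPretWithMarker ψ w := by
  induction h with
  | id => exact ⟨[], isPretWithMarker_singleton⟩
  | perm_comp π _ ih =>
    obtain ⟨w, hw⟩ := ih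
    exact ⟨_, hw.map π.injective⟩
  | psi_comp a _ ih =>
    obtain ⟨w, hw⟩ := ih
    exact ⟨_, hw.psi_comp a⟩

lemma IsAR.exists_isStandardAR_conj {φ : A → List A} (hφ : IsAR φ) :
    ∃ (ψ : A → List A) (x : List A), IsStandardAR ψ ∧ ∀ a, ψ a ++ x = x ++ φ a := by
  induction hφ with
  | perm π => exact ⟨_, [], .perm_comp π .id, fun a => rfl⟩
  | psiL a => exact ⟨psi a, [], by simpa using IsStandardAR.id.psi_comp a, by simp [psi]⟩
  | psiR a =>
    exact ⟨psi a, [a], by simpa using IsStandardAR.id.psi_comp a, psi_append_singleton a⟩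
  | comp _ _ ih₁ ih₂ =>
    obtain ⟨ψ₁, x₁, hψ₁, hx₁⟩ := ih₁
    obtain ⟨ψ₂, x₂, hψ₂, hx₂⟩ := ih₂
    refine ⟨_, applyM ψ₁ x₂ ++ x₁, hψ₁.comp hψ₂, fun b => ?_⟩
    rw [← append_assoc, ← applyM_append_s8, hx₂, applyM_append_s8, append_assoc,
      applyM_append_comm_of_forall hx₁, append_assoc]

end Standard

theorem arnoux_rauzy_conjugate_pret_general {A : Type*} [DecidableEq A]
    (φ : A → List A) (hφ : IsAR φ) :
    ∃ (ψ : A → List A) (w x : List A),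
      IsPretWithMarker ψ w ∧ ∀ a : A, ψ a ++ x = x ++ φ a := by
  obtain ⟨ψ, x, hψ, hx⟩ := hφ.exists_isStandardAR_conj
  obtain ⟨w, hw⟩ := hψ.exists_isPretWithMarker
  exact ⟨ψ, w, x, hw, hx⟩

/-- Each Arnoux-Rauzy morphism is conjugated to a morphism in `P_ret`. -/
theorem arnoux_rauzy_conjugate_pret {A : Type*} [Fintype A] [DecidableEq A]
    (φ : A → List A) (hφ : IsAR φ) :
    ∃ (ψ : A → List A) (w x : List A),
      IsPretWithMarker ψ w ∧ ∀ a : A, ψ a ++ x = x ++ φ a :=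
  arnoux_rauzy_conjugate_pret_general φ hφ
end
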